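/- Let E be an (n+1)-complex of R-modules such that for every fixed (a₁,…,aₙ) ∈ ℤⁿ the cochain complex (E^{a₁,…,aₙ,*}, d_{n+1}) is exact (i.e. E is exact in the (n+1)st direction). Then the truncated product totalisation of E is acyclic: every cocycle of trTot(E) is a coboundary. -/
import Mathlib


/-- An `(n+1)`-complex of `R`-modules: a family of modules indexed by
`ℤ^{n+1}` with commuting-up-to-sign differentials `d_i` of degree `e_i`
satisfying `d_i ∘ d_i = 0` and `d_i d_j = −d_j d_i` for `i ≠ j`. -/
structure MultiComplex (R : Type) [Ring R] (n : ℕ) : Type 1 where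
  E : (Fin (n + 1) → ℤ) → Type
  [acg : ∀ b, AddCommGroup (E b)]
  [mod : ∀ b, Module R (E b)]
  d : ∀ (i : Fin (n + 1)) (b b' : Fin (n + 1) → ℤ),
      b + Pi.single i 1 = b' → (E b →ₗ[R] E b')
  dd : ∀ (i : Fin (n + 1)) (b b₁ b₂ : Fin (n + 1) → ℤ)
      (h : b + Pi.single i 1 = b₁) (h' : b₁ + Pi.single i 1 = b₂),
      (d i b₁ b₂ h').comp (d i b b₁ h) = 0
  anticomm : ∀ (i j : Fin (n + 1)), i ≠ j →
      ∀ (b bi bj b₂ : Fin (n + 1) → ℤ)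
      (hi : b + Pi.single i 1 = bi) (hj : b + Pi.single j 1 = bj)
      (hi' : bj + Pi.single i 1 = b₂) (hj' : bi + Pi.single j 1 = b₂),
      (d j bi b₂ hj').comp (d i b bi hi) = - ((d i bj b₂ hi').comp (d j b bj hj))

attribute [instance] MultiComplex.acg MultiComplex.mod

variable {R : Type} [Ring R] {n : ℕ}

/-- `[a, k] = (a₁, …, aₙ, k − a₁ − ⋯ − aₙ) ∈ ℤ^{n+1}`. -/
def embed (a : Fin n → ℤ) (k : ℤ) : Fin (n + 1) → ℤ :=
  Fin.snoc a (k - ∑ i, a i)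

lemma embed_last_step (a : Fin n → ℤ) (k k' : ℤ) (hk : k + 1 = k') :
    embed a k + Pi.single (Fin.last n) 1 = embed a k' := by
  funext j
  cases j using Fin.lastCases with
  | last => simp [embed, Fin.snoc_last]; omega
  | cast i =>
      simp [embed, Fin.snoc_castSucc,
        Pi.single_eq_of_ne (Fin.castSucc_lt_last i).ne]

lemma embed_step (a : Fin n → ℤ) (k k' : ℤ) (hk : k + 1 = k') (i : Fin n) :
    embed (a - Pi.single i 1) k + Pi.single i.castSucc 1 = embed a k' := by
  funext j
  cases j using Fin.lastCases with
  | last =>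
      simp [embed, Fin.snoc_last, Pi.single_eq_of_ne (Fin.castSucc_lt_last i).ne',
        Finset.sum_sub_distrib, Finset.sum_pi_single]
      omega
  | cast j' =>
      by_cases hji : j' = i
      · subst hji
        simp [embed, Fin.snoc_castSucc, Pi.single_eq_same]
      · simp [embed, Fin.snoc_castSucc,
          Pi.single_eq_of_ne (fun hc => hji (Fin.castSucc_injective n hc)),
          Pi.single_eq_of_ne hji]

/-- The degree-`k` part of the truncated product totalisation of an
`(n+1)`-complex: families `g ∈ ∏_{a ∈ ℤⁿ} E^{[a,k]}` such that
`m·(1,…,1) + supp(g) ⊆ ℕⁿ` for some `m ∈ ℕ`. -/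
noncomputable def trT (Ecx : MultiComplex R n) (k : ℤ) :
    Submodule R (∀ a : Fin n → ℤ, Ecx.E (embed a k)) where
  carrier := {g | ∃ m : ℕ, ∀ a : Fin n → ℤ, g a ≠ 0 → ∀ i, -(m : ℤ) ≤ a i}
  add_mem' := by
    rintro g h ⟨m1, h1⟩ ⟨m2, h2⟩
    refine ⟨max m1 m2, fun a ha i => ?_⟩
    by_cases hg : g a = 0
    · have hh : h a ≠ 0 := by
        intro h0; apply ha; simp only [Pi.add_apply, hg, h0, add_zero]
      have := h2 a hh i; push_cast; omega
    · have := h1 a hg i; push_cast; omega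
  zero_mem' := ⟨0, fun a ha _ => absurd rfl ha⟩
  smul_mem' := by
    rintro c g ⟨m, hm⟩
    refine ⟨m, fun a ha i => ?_⟩
    refine hm a (fun h0 => ha ?_) i
    simp only [Pi.smul_apply, h0, smul_zero]

/-- The differential of the truncated product totalisation,
`d = d₁ + ⋯ + d_{n+1}`, on the ambient product: its component at `a` is
`d_{n+1}(g_a) + Σ_{i≤n} d_i(g_{a−e_i})`. -/
noncomputable def DtrFull (Ecx : MultiComplex R n) (k k' : ℤ) (hk : k + 1 = k') :
    (∀ a : Fin n → ℤ, Ecx.E (embed a k)) →ₗ[R] (∀ a : Fin n → ℤ, Ecx.E (embed a k')) :=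
  LinearMap.pi fun a =>
    (Ecx.d (Fin.last n) (embed a k) (embed a k') (embed_last_step a k k' hk)).comp
        (LinearMap.proj a) +
      ∑ i : Fin n,
        (Ecx.d i.castSucc (embed (a - Pi.single i 1) k) (embed a k')
            (embed_step a k k' hk i)).comp
          (LinearMap.proj (a - Pi.single i 1))

lemma DtrFull_mem (Ecx : MultiComplex R n) (k k' : ℤ) (hk : k + 1 = k')
    {g : ∀ a : Fin n → ℤ, Ecx.E (embed a k)} (hg : g ∈ trT Ecx k) :
    DtrFull Ecx k k' hk g ∈ trT Ecx k' := by
  obtain ⟨m, hm⟩ := hg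
  refine ⟨m + 1, fun a ha i => ?_⟩
  by_cases hga : g a ≠ 0
  · have := hm a hga i; push_cast; omega
  · push_neg at hga
    have hex : ∃ i₀ : Fin n, g (a - Pi.single i₀ 1) ≠ 0 := by
      by_contra hall
      push_neg at hall
      apply ha
      simp only [DtrFull, LinearMap.pi_apply, LinearMap.add_apply, LinearMap.comp_apply,
        LinearMap.proj_apply, LinearMap.sum_apply, hga, map_zero]
      rw [Finset.sum_eq_zero fun i₀ _ => by rw [hall i₀, map_zero], add_zero]
    obtain ⟨i₀, hi₀⟩ := hex
    have h1 := hm _ hi₀ i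
    have h2 : a i - 1 ≤ (a - Pi.single i₀ 1 : Fin n → ℤ) i ∧ (a - Pi.single i₀ 1 : Fin n → ℤ) i ≤ a i := by
      simp only [Pi.sub_apply, Pi.single_apply]
      split <;> omega
    push_cast at h1 ⊢
    omega

/-- The differential of the truncated product totalisation. -/
noncomputable def Dtr (Ecx : MultiComplex R n) (k k' : ℤ) (hk : k + 1 = k') :
    trT Ecx k →ₗ[R] trT Ecx k' :=
  (DtrFull Ecx k k' hk).restrict fun _ hg => DtrFull_mem Ecx k k' hk hg

section Acyclic

variable (Ecx : MultiComplex R n)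

/-- Exactness in the last direction. -/
abbrev Hexact : Prop :=
  ∀ (b b' b'' : Fin (n + 1) → ℤ)
    (h : b + Pi.single (Fin.last n) 1 = b')
    (h' : b' + Pi.single (Fin.last n) 1 = b'')
    (x : Ecx.E b'), Ecx.d (Fin.last n) b' b'' h' x = 0 →
      ∃ y : Ecx.E b, Ecx.d (Fin.last n) b b' h y = x

lemma d_zero_congr (i : Fin (n + 1)) (b b' b'' : Fin (n + 1) → ℤ)
    (h : b + Pi.single i 1 = b') (h' : b + Pi.single i 1 = b'')
    (x : Ecx.E b) : Ecx.d i b b' h x = 0 ↔ Ecx.d i b b'' h' x = 0 := by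
  subst h; subst h'; exact Iff.rfl

open Classical in
noncomputable def secd (hex : Hexact Ecx) (b b' : Fin (n + 1) → ℤ)
    (h : b + Pi.single (Fin.last n) 1 = b') (x : Ecx.E b') : Ecx.E b :=
  if hx : Ecx.d (Fin.last n) b' (b' + Pi.single (Fin.last n) 1) rfl x = 0 then
    (hex b b' _ h rfl x hx).choose
  else 0

lemma secd_spec (hex : Hexact Ecx) (b b' b'' : Fin (n + 1) → ℤ)
    (h : b + Pi.single (Fin.last n) 1 = b') (h' : b' + Pi.single (Fin.last n) 1 = b'')
    (x : Ecx.E b') (hx : Ecx.d (Fin.last n) b' b'' h' x = 0) :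
    Ecx.d (Fin.last n) b b' h (secd Ecx hex b b' h x) = x := by
  rw [d_zero_congr Ecx _ _ _ (b' + Pi.single (Fin.last n) 1) h' rfl] at hx
  rw [secd, dif_pos hx]
  exact (hex b b' _ h rfl x hx).choose_spec

def mu (m : ℕ) (a : Fin n → ℤ) : ℕ :=
  if ∀ i, -(m : ℤ) ≤ a i then (∑ i, a i + n * m + 1).toNat else 0

lemma sum_sub_single (a : Fin n → ℤ) (i : Fin n) :
    ∑ j, (a - Pi.single i 1 : Fin n → ℤ) j = (∑ j, a j) - 1 := by
  simp [Finset.sum_sub_distrib, Finset.sum_pi_single]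

lemma sum_lower (m : ℕ) (a : Fin n → ℤ) (h : ∀ i, -(m : ℤ) ≤ a i) :
    -((n : ℤ) * m) ≤ ∑ i, a i := by
  calc -((n : ℤ) * m) = ∑ _i : Fin n, -(m : ℤ) := by
        simp [Finset.sum_const]
      _ ≤ _ := Finset.sum_le_sum fun i _ => h i

lemma mu_pos (m : ℕ) (a : Fin n → ℤ) (h : ∀ i, -(m : ℤ) ≤ a i) : 1 ≤ mu m a := by
  have hl := sum_lower m a h
  rw [mu, if_pos h]
  omega

lemma mu_lt (m : ℕ) (a : Fin n → ℤ) (h : ∀ i, -(m : ℤ) ≤ a i) (i : Fin n) :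
    mu m (a - Pi.single i 1) < mu m a := by
  have hpos := mu_pos m a h
  have hmu : mu m a = (∑ j, a j + n * m + 1).toNat := if_pos h
  have hl := sum_lower m a h
  by_cases h' : ∀ j : Fin n, -(m : ℤ) ≤ (a - Pi.single i 1 : Fin n → ℤ) j
  · have h2 : mu m (a - Pi.single i 1)
        = (∑ j, (a - Pi.single i 1 : Fin n → ℤ) j + n * m + 1).toNat := if_pos h'
    rw [h2, hmu, sum_sub_single]
    omega
  · have h2 : mu m (a - Pi.single i 1) = 0 := if_neg h'
    omega

lemma sub_single_comm (a : Fin n → ℤ) (i j : Fin n) :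
    a - Pi.single i 1 - Pi.single j 1 = a - Pi.single j 1 - Pi.single i 1 := by
  rw [sub_sub, sub_sub, add_comm]

noncomputable def buildF (hex : Hexact Ecx) (k : ℤ) (m : ℕ)
    (g : ∀ a : Fin n → ℤ, Ecx.E (embed a k)) (a : Fin n → ℤ) : Ecx.E (embed a (k - 1)) :=
  if h : ∀ i, -(m : ℤ) ≤ a i then
    secd Ecx hex (embed a (k - 1)) (embed a k) (embed_last_step a (k - 1) k (by ring))
      (g a - ∑ i : Fin n,
        Ecx.d i.castSucc (embed (a - Pi.single i 1) (k - 1)) (embed a k)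
          (embed_step a (k - 1) k (by ring) i)
          (buildF hex k m g (a - Pi.single i 1)))
  else 0
termination_by mu m a
decreasing_by exact mu_lt m a h _

lemma buildF_notreg (hex : Hexact Ecx) (k : ℤ) (m : ℕ)
    (g : ∀ a : Fin n → ℤ, Ecx.E (embed a k)) (a : Fin n → ℤ)
    (h : ¬ ∀ i, -(m : ℤ) ≤ a i) : buildF Ecx hex k m g a = 0 := by
  rw [buildF, dif_neg h]

lemma d_src_congr (i : Fin (n + 1)) (kk : ℤ) (p q : Fin n → ℤ) (hpq : p = q)
    (b' : Fin (n + 1) → ℤ)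
    (h : embed p kk + Pi.single i 1 = b') (h' : embed q kk + Pi.single i 1 = b')
    (F : ∀ a : Fin n → ℤ, Ecx.E (embed a kk)) :
    Ecx.d i (embed p kk) b' h (F p) = Ecx.d i (embed q kk) b' h' (F q) := by
  subst hpq; rfl

lemma double_vanish (k k' k'' : ℤ) (hk : k + 1 = k') (hk' : k' + 1 = k'')
    (F : ∀ a : Fin n → ℤ, Ecx.E (embed a k)) (a : Fin n → ℤ) :
    ∑ i : Fin n, Ecx.d i.castSucc (embed (a - Pi.single i 1) k') (embed a k'')
        (embed_step a k' k'' hk' i)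
        (∑ j : Fin n, Ecx.d j.castSucc (embed (a - Pi.single i 1 - Pi.single j 1) k)
          (embed (a - Pi.single i 1) k') (embed_step (a - Pi.single i 1) k k' hk j)
          (F (a - Pi.single i 1 - Pi.single j 1))) = 0 := by
  simp only [map_sum]
  rw [← Finset.sum_product']
  refine Finset.sum_involution (fun p _ => (p.2, p.1)) ?_ ?_
    (fun _ _ => Finset.mem_univ _) (fun p _ => rfl)
  · rintro ⟨i, j⟩ -
    dsimp only
    by_cases hij : i = j
    · subst hij
      have h0 := Ecx.dd i.castSucc (embed (a - Pi.single i 1 - Pi.single i 1) k)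
        (embed (a - Pi.single i 1) k') (embed a k'')
        (embed_step (a - Pi.single i 1) k k' hk i) (embed_step a k' k'' hk' i)
      have h1 := LinearMap.congr_fun h0 (F (a - Pi.single i 1 - Pi.single i 1))
      simp only [LinearMap.comp_apply, LinearMap.zero_apply] at h1
      rw [h1, add_zero]
    · have hswap : a - Pi.single j 1 - Pi.single i 1 = a - Pi.single i 1 - Pi.single j 1 :=
        sub_single_comm a j i
      rw [d_src_congr Ecx i.castSucc k _ _ hswap (embed (a - Pi.single j 1) k')
        (embed_step (a - Pi.single j 1) k k' hk i)
        (hswap ▸ embed_step (a - Pi.single j 1) k k' hk i) F]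
      have hne : (i.castSucc : Fin (n + 1)) ≠ j.castSucc :=
        fun hc => hij (Fin.castSucc_injective n hc)
      have hAC := Ecx.anticomm i.castSucc j.castSucc hne
        (embed (a - Pi.single i 1 - Pi.single j 1) k)
        (embed (a - Pi.single j 1) k')
        (embed (a - Pi.single i 1) k')
        (embed a k'')
        (hswap ▸ embed_step (a - Pi.single j 1) k k' hk i)
        (embed_step (a - Pi.single i 1) k k' hk j)
        (embed_step a k' k'' hk' i)
        (embed_step a k' k'' hk' j)
      have h1 := LinearMap.congr_fun hAC (F (a - Pi.single i 1 - Pi.single j 1))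
      simp only [LinearMap.comp_apply, LinearMap.neg_apply] at h1
      rw [add_comm, h1, neg_add_cancel]
  · rintro ⟨i, j⟩ - hne
    intro hc
    apply hne
    have : i = j := congrArg Prod.snd hc
    subst this
    have h0 := Ecx.dd i.castSucc (embed (a - Pi.single i 1 - Pi.single i 1) k)
      (embed (a - Pi.single i 1) k') (embed a k'')
      (embed_step (a - Pi.single i 1) k k' hk i) (embed_step a k' k'' hk' i)
    have h1 := LinearMap.congr_fun h0 (F (a - Pi.single i 1 - Pi.single i 1))
    simp only [LinearMap.comp_apply, LinearMap.zero_apply] at h1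
    exact h1

lemma buildF_spec (hex : Hexact Ecx) (k k' : ℤ) (hk : k + 1 = k') (m : ℕ)
    (g : ∀ a : Fin n → ℤ, Ecx.E (embed a k))
    (hg0 : ∀ a : Fin n → ℤ, g a ≠ 0 → ∀ i, -(m : ℤ) ≤ a i)
    (hgD : ∀ a : Fin n → ℤ,
      Ecx.d (Fin.last n) (embed a k) (embed a k') (embed_last_step a k k' hk) (g a) +
        ∑ i : Fin n, Ecx.d i.castSucc (embed (a - Pi.single i 1) k) (embed a k')
          (embed_step a k k' hk i) (g (a - Pi.single i 1)) = 0) :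
    ∀ a : Fin n → ℤ,
      Ecx.d (Fin.last n) (embed a (k - 1)) (embed a k)
          (embed_last_step a (k - 1) k (by ring)) (buildF Ecx hex k m g a) +
        ∑ i : Fin n, Ecx.d i.castSucc (embed (a - Pi.single i 1) (k - 1)) (embed a k)
          (embed_step a (k - 1) k (by ring) i) (buildF Ecx hex k m g (a - Pi.single i 1))
        = g a := by
  have hout : ∀ a : Fin n → ℤ, ¬ (∀ i, -(m : ℤ) ≤ a i) →
      Ecx.d (Fin.last n) (embed a (k - 1)) (embed a k)
          (embed_last_step a (k - 1) k (by ring)) (buildF Ecx hex k m g a) +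
        ∑ i : Fin n, Ecx.d i.castSucc (embed (a - Pi.single i 1) (k - 1)) (embed a k)
          (embed_step a (k - 1) k (by ring) i) (buildF Ecx hex k m g (a - Pi.single i 1))
        = g a := by
    intro a h
    obtain ⟨i₀, hi₀⟩ := not_forall.mp h
    rw [not_le] at hi₀
    have hga : g a = 0 := by
      by_contra hne
      exact absurd (hg0 a hne i₀) (not_le.mpr hi₀)
    have hfa : buildF Ecx hex k m g a = 0 := buildF_notreg Ecx hex k m g a h
    rw [hga, hfa, map_zero, zero_add]
    refine Finset.sum_eq_zero fun i _ => ?_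
    have hfi : buildF Ecx hex k m g (a - Pi.single i 1) = 0 := by
      refine buildF_notreg Ecx hex k m g _ fun hall => ?_
      have h1 := hall i₀
      have h2 : (a - Pi.single i 1 : Fin n → ℤ) i₀ ≤ a i₀ := by
        simp only [Pi.sub_apply, Pi.single_apply]
        split <;> omega
      omega
    rw [hfi, map_zero]
  have key : ∀ N : ℕ, ∀ a : Fin n → ℤ, mu m a ≤ N →
      Ecx.d (Fin.last n) (embed a (k - 1)) (embed a k)
          (embed_last_step a (k - 1) k (by ring)) (buildF Ecx hex k m g a) +
        ∑ i : Fin n, Ecx.d i.castSucc (embed (a - Pi.single i 1) (k - 1)) (embed a k)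
          (embed_step a (k - 1) k (by ring) i) (buildF Ecx hex k m g (a - Pi.single i 1))
        = g a := by
    intro N
    induction N with
    | zero =>
      intro a hN
      refine hout a fun h => ?_
      have := mu_pos m a h
      omega
    | succ N ih =>
      intro a hN
      by_cases h : ∀ i, -(m : ℤ) ≤ a i
      · have hbf : buildF Ecx hex k m g a =
            secd Ecx hex (embed a (k - 1)) (embed a k) (embed_last_step a (k - 1) k (by ring))
              (g a - ∑ i : Fin n,
                Ecx.d i.castSucc (embed (a - Pi.single i 1) (k - 1)) (embed a k)
                  (embed_step a (k - 1) k (by ring) i)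
                  (buildF Ecx hex k m g (a - Pi.single i 1))) := by
          rw [buildF, dif_pos h]
        have hIH : ∀ i : Fin n,
            Ecx.d (Fin.last n) (embed (a - Pi.single i 1) (k - 1)) (embed (a - Pi.single i 1) k)
              (embed_last_step (a - Pi.single i 1) (k - 1) k (by ring))
              (buildF Ecx hex k m g (a - Pi.single i 1)) =
            g (a - Pi.single i 1) - ∑ j : Fin n,
              Ecx.d j.castSucc (embed (a - Pi.single i 1 - Pi.single j 1) (k - 1))
                (embed (a - Pi.single i 1) k)
                (embed_step (a - Pi.single i 1) (k - 1) k (by ring) j)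
                (buildF Ecx hex k m g (a - Pi.single i 1 - Pi.single j 1)) := by
          intro i
          have hlt := mu_lt m a h i
          exact eq_sub_of_add_eq (ih (a - Pi.single i 1) (by omega))
        have hcoc : Ecx.d (Fin.last n) (embed a k) (embed a k') (embed_last_step a k k' hk)
            (g a - ∑ i : Fin n,
              Ecx.d i.castSucc (embed (a - Pi.single i 1) (k - 1)) (embed a k)
                (embed_step a (k - 1) k (by ring) i)
                (buildF Ecx hex k m g (a - Pi.single i 1))) = 0 := by
          rw [map_sub, map_sum]
          have hterm : ∀ i : Fin n,
              Ecx.d (Fin.last n) (embed a k) (embed a k') (embed_last_step a k k' hk)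
                (Ecx.d i.castSucc (embed (a - Pi.single i 1) (k - 1)) (embed a k)
                  (embed_step a (k - 1) k (by ring) i)
                  (buildF Ecx hex k m g (a - Pi.single i 1)))
              = -(Ecx.d i.castSucc (embed (a - Pi.single i 1) k) (embed a k')
                    (embed_step a k k' hk i) (g (a - Pi.single i 1)) -
                  Ecx.d i.castSucc (embed (a - Pi.single i 1) k) (embed a k')
                    (embed_step a k k' hk i)
                    (∑ j : Fin n,
                      Ecx.d j.castSucc (embed (a - Pi.single i 1 - Pi.single j 1) (k - 1))
                        (embed (a - Pi.single i 1) k)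
                        (embed_step (a - Pi.single i 1) (k - 1) k (by ring) j)
                        (buildF Ecx hex k m g (a - Pi.single i 1 - Pi.single j 1)))) := by
            intro i
            have hAC := Ecx.anticomm i.castSucc (Fin.last n) (Fin.castSucc_lt_last i).ne
              (embed (a - Pi.single i 1) (k - 1)) (embed a k) (embed (a - Pi.single i 1) k)
              (embed a k')
              (embed_step a (k - 1) k (by ring) i)
              (embed_last_step (a - Pi.single i 1) (k - 1) k (by ring))
              (embed_step a k k' hk i)
              (embed_last_step a k k' hk)
            have h1 := LinearMap.congr_fun hAC (buildF Ecx hex k m g (a - Pi.single i 1))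
            simp only [LinearMap.comp_apply, LinearMap.neg_apply] at h1
            rw [h1, hIH i, map_sub]
          rw [Finset.sum_congr rfl fun i _ => hterm i]
          rw [Finset.sum_neg_distrib, sub_neg_eq_add, Finset.sum_sub_distrib]
          rw [double_vanish Ecx (k - 1) k k' (by ring) hk (buildF Ecx hex k m g) a]
          rw [sub_zero]
          exact hgD a
        rw [hbf, secd_spec Ecx hex (embed a (k - 1)) (embed a k) (embed a k')
          (embed_last_step a (k - 1) k (by ring)) (embed_last_step a k k' hk) _ hcoc]
        abel
      · exact hout a h
  intro a
  exact key (mu m a) a le_rfl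

end Acyclic

/-- Let `E` be an `(n+1)`-complex of `R`-modules which is
exact in the `(n+1)`st direction (for every fixed `(a₁,…,aₙ) ∈ ℤⁿ` the cochain
complex `(E^{a₁,…,aₙ,*}, d_{n+1})` is exact). Then the truncated product
totalisation of `E` is acyclic: every cocycle of `trTot(E)` is a coboundary. -/
theorem trTot_acyclic (Ecx : MultiComplex R n)
    (hexact : ∀ (b b' b'' : Fin (n + 1) → ℤ)
      (h : b + Pi.single (Fin.last n) 1 = b')
      (h' : b' + Pi.single (Fin.last n) 1 = b'')
      (x : Ecx.E b'), Ecx.d (Fin.last n) b' b'' h' x = 0 →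
        ∃ y : Ecx.E b, Ecx.d (Fin.last n) b b' h y = x) :
    ∀ (k k' : ℤ) (hk : k + 1 = k') (g : trT Ecx k),
      Dtr Ecx k k' hk g = 0 →
        ∃ f : trT Ecx (k - 1), Dtr Ecx (k - 1) k (by omega) f = g := by
  intro k k' hk g hgd
  obtain ⟨m, hm⟩ := g.2
  have hgD0 : DtrFull Ecx k k' hk g.1 = 0 := congrArg Subtype.val hgd
  have hgD : ∀ a : Fin n → ℤ,
      Ecx.d (Fin.last n) (embed a k) (embed a k') (embed_last_step a k k' hk) (g.1 a) +
        ∑ i : Fin n, Ecx.d i.castSucc (embed (a - Pi.single i 1) k) (embed a k')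
          (embed_step a k k' hk i) (g.1 (a - Pi.single i 1)) = 0 := by
    intro a
    have h1 := congrFun hgD0 a
    simpa only [DtrFull, LinearMap.pi_apply, LinearMap.add_apply, LinearMap.comp_apply,
      LinearMap.proj_apply, LinearMap.sum_apply, Pi.zero_apply] using h1
  refine ⟨⟨buildF Ecx hexact k m g.1, ⟨m, fun a ha i => ?_⟩⟩, ?_⟩
  · by_contra hlt
    exact ha (buildF_notreg Ecx hexact k m g.1 a fun hall => hlt (hall i))
  · apply Subtype.ext
    funext a
    show DtrFull Ecx (k - 1) k (by omega) (buildF Ecx hexact k m g.1) a = g.1 a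
    simp only [DtrFull, LinearMap.pi_apply, LinearMap.add_apply, LinearMap.comp_apply,
      LinearMap.proj_apply, LinearMap.sum_apply]
    exact buildF_spec Ecx hexact k k' hk m g.1 hm hgD a
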